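/- For all i, j, k in {1,...,m}, each of the elements a_i, a_j, a_k and b commutes with (a_i a_j a_k b)^3 in G_{g,n}. -/

import Mathlib

/-!
The Gervais presentation of the mapping class group `M_{g,n}` of a compact
oriented surface of genus `g ≥ 1` with `n` boundary components
(S. Gervais, "A finite presentation of the mapping class group of an
oriented surface").

Set `m = 2g + n - 2`.  The group `G g n` below is the group presented with
generators `b`, `b_1, …, b_{g-1}`, `a_1, …, a_m` and `c_{i,j}`
(`1 ≤ i, j ≤ m`, `i ≠ j`) and the relations

* (A) handles: `c_{2s,2s+1} = c_{2s-1,2s}` for `1 ≤ s ≤ g-1`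
  (indices understood cyclically in `{1, …, m}`);
* (T) braids: `xy = yx` whenever the simple closed curves of Gervais's
  configuration labelling the generators `x, y` are disjoint, and
  `xyx = yxy` whenever they intersect transversally in a single point;
* (E_{i,j,k}) stars: `c_{i,j} c_{j,k} c_{k,i} = (a_i a_j a_k b)^3` for each
  good triple `(i,j,k)`, with the convention `c_{l,l} = 1`.

The geometric intersection data of Gervais's configuration is encoded
combinatorially:  the curves `α_1, …, α_m` are pairwise disjoint, `β` meets
each `α_i` in one point, `β_s` meets exactly `α_{2s-1}` and `α_{2s}` among
the `α`'s, once each, and is disjoint from `β` and from the other `β_t`;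
the curve `γ_{i,j}` is disjoint from `β` and from every `α_k`; `β_s` meets
`γ_{i,j}` in one point exactly when `2s ∈ {i,j}`, and two curves `γ_{i,j}`,
`γ_{k,l}` are disjoint exactly when the corresponding cyclic intervals
`[i,j]`, `[k,l]` of `{1, …, m}` do not cross.
-/

namespace Gervais

/-- Generators of the Gervais presentation:  `beta` is `b` (the twist along
`β`), `betaI s` is `b_s` (`1 ≤ s ≤ g-1`), `alpha i` is `a_i`
(`1 ≤ i ≤ 2g+n-2`) and `gamma i j` is `c_{i,j}` (`i ≠ j`). -/
inductive Gen (g n : ℕ) : Type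
  | beta : Gen g n
  | betaI : (s : ℕ) → 1 ≤ s ∧ s ≤ g - 1 → Gen g n
  | alpha : (i : ℕ) → 1 ≤ i ∧ i ≤ 2 * g + n - 2 → Gen g n
  | gamma : (i j : ℕ) →
      (1 ≤ i ∧ i ≤ 2 * g + n - 2) ∧ (1 ≤ j ∧ j ≤ 2 * g + n - 2) ∧ i ≠ j → Gen g n

/-- `x` lies strictly inside the cyclic interval from `a` to `b` in `{1, …, m}`. -/
def StrictlyInside (m a x b : ℕ) : Prop :=
  0 < (x + m - a) % m ∧ (x + m - a) % m < (b + m - a) % m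

/-- The cyclic intervals `[i,j]` and `[k,l]` of `{1, …, m}` cross each other. -/
def Linked (m i j k l : ℕ) : Prop :=
  k ≠ i ∧ k ≠ j ∧ l ≠ i ∧ l ≠ j ∧
    ¬(StrictlyInside m i k j ↔ StrictlyInside m i l j)

/-- The curves labelling the two generators intersect transversally in a
single point. -/
def MeetOnce (g n : ℕ) : Gen g n → Gen g n → Prop
  | .beta, .alpha _ _ => True
  | .alpha _ _, .beta => True
  | .betaI s _, .alpha k _ => k = 2 * s - 1 ∨ k = 2 * s
  | .alpha k _, .betaI s _ => k = 2 * s - 1 ∨ k = 2 * s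
  | .betaI s _, .gamma i j _ => i = 2 * s ∨ j = 2 * s
  | .gamma i j _, .betaI s _ => i = 2 * s ∨ j = 2 * s
  | _, _ => False

/-- The curves labelling the two generators are disjoint. -/
def DisjointCurves (g n : ℕ) : Gen g n → Gen g n → Prop
  | .beta, .beta => False
  | .beta, .alpha _ _ => False
  | .alpha _ _, .beta => False
  | .beta, .betaI _ _ => True
  | .betaI _ _, .beta => True
  | .beta, .gamma _ _ _ => True
  | .gamma _ _ _, .beta => True
  | .alpha i _, .alpha j _ => i ≠ j
  | .alpha _ _, .gamma _ _ _ => True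
  | .gamma _ _ _, .alpha _ _ => True
  | .alpha k _, .betaI s _ => ¬(k = 2 * s - 1 ∨ k = 2 * s)
  | .betaI s _, .alpha k _ => ¬(k = 2 * s - 1 ∨ k = 2 * s)
  | .betaI s _, .betaI t _ => s ≠ t
  | .betaI s _, .gamma i j _ => ¬(i = 2 * s ∨ j = 2 * s)
  | .gamma i j _, .betaI s _ => ¬(i = 2 * s ∨ j = 2 * s)
  | .gamma i j _, .gamma k l _ =>
      ¬Linked (2 * g + n - 2) i j k l ∧ ¬Linked (2 * g + n - 2) k l i j

/-- The letter `a_i` in the free group (out-of-range indices give `1`). -/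
def aF (g n : ℕ) (i : ℕ) : FreeGroup (Gen g n) :=
  if h : 1 ≤ i ∧ i ≤ 2 * g + n - 2 then FreeGroup.of (Gen.alpha i h) else 1

/-- The letter `c_{i,j}` in the free group, with the convention `c_{l,l} = 1`
(out-of-range indices give `1`). -/
def cF (g n : ℕ) (i j : ℕ) : FreeGroup (Gen g n) :=
  if h : (1 ≤ i ∧ i ≤ 2 * g + n - 2) ∧ (1 ≤ j ∧ j ≤ 2 * g + n - 2) ∧ i ≠ j then
    FreeGroup.of (Gen.gamma i j h) else 1

/-- Reduction of an index into `{1, …, m}`, cyclically. -/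
def cyc (m k : ℕ) : ℕ := (k - 1) % m + 1

/-- `(i,j,k)` is a good triple of `{1, …, m}^3`: the three entries are not
all equal and `i ≤ j ≤ k` or `j ≤ k ≤ i` or `k ≤ i ≤ j`. -/
def Good (m i j k : ℕ) : Prop :=
  (1 ≤ i ∧ i ≤ m) ∧ (1 ≤ j ∧ j ≤ m) ∧ (1 ≤ k ∧ k ≤ m) ∧
    ¬(i = j ∧ j = k) ∧ ((i ≤ j ∧ j ≤ k) ∨ (j ≤ k ∧ k ≤ i) ∨ (k ≤ i ∧ i ≤ j))

/-- The relators of the Gervais presentation: handles `(A)`, braids `(T)` and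
stars `(E_{i,j,k})`. -/
inductive IsRel (g n : ℕ) : FreeGroup (Gen g n) → Prop
  | handle (s : ℕ) (h : 1 ≤ s ∧ s ≤ g - 1) :
      IsRel g n (cF g n (2 * s) (cyc (2 * g + n - 2) (2 * s + 1)) *
        (cF g n (2 * s - 1) (2 * s))⁻¹)
  | comm (x y : Gen g n) (h : DisjointCurves g n x y) :
      IsRel g n (FreeGroup.of x * FreeGroup.of y *
        (FreeGroup.of y * FreeGroup.of x)⁻¹)
  | braid (x y : Gen g n) (h : MeetOnce g n x y) :
      IsRel g n (FreeGroup.of x * FreeGroup.of y * FreeGroup.of x *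
        (FreeGroup.of y * FreeGroup.of x * FreeGroup.of y)⁻¹)
  | star (i j k : ℕ) (h : Good (2 * g + n - 2) i j k) :
      IsRel g n (cF g n i j * cF g n j k * cF g n k i *
        ((aF g n i * aF g n j * aF g n k * FreeGroup.of Gen.beta) ^ 3)⁻¹)

/-- The group `G_{g,n}` of the Gervais presentation. -/
abbrev G (g n : ℕ) : Type := PresentedGroup {r : FreeGroup (Gen g n) | IsRel g n r}

/-- The generator `b` of `G_{g,n}`. -/
def b (g n : ℕ) : G g n := PresentedGroup.of Gen.beta

/-- The generator `b_s` of `G_{g,n}` (out-of-range: `1`). -/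
def bI (g n : ℕ) (s : ℕ) : G g n :=
  if h : 1 ≤ s ∧ s ≤ g - 1 then PresentedGroup.of (Gen.betaI s h) else 1

/-- The generator `a_i` of `G_{g,n}` (out-of-range: `1`). -/
def a (g n : ℕ) (i : ℕ) : G g n :=
  if h : 1 ≤ i ∧ i ≤ 2 * g + n - 2 then PresentedGroup.of (Gen.alpha i h) else 1

/-- The generator `c_{i,j}` of `G_{g,n}` (`c_{l,l} = 1`; out-of-range: `1`). -/
def c (g n : ℕ) (i j : ℕ) : G g n :=
  if h : (1 ≤ i ∧ i ≤ 2 * g + n - 2) ∧ (1 ≤ j ∧ j ≤ 2 * g + n - 2) ∧ i ≠ j then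
    PresentedGroup.of (Gen.gamma i j h) else 1

end Gervais

/-!
If `i, j, k` are not all equal then, the `a`'s commuting pairwise, `(i, j, k)` or `(j, i, k)` is a
good triple, and the star relation writes `(a_i a_j a_k b)^3` as a product of `c`'s; each `c_{p,q}`
commutes with every `a_l` and with `b`, since `γ_{p,q}` is disjoint from `β` and from every `α_l`.
If `i = j = k` only the braid relation `a b a = b a b` is left: `Δ = a b a` conjugates `a` to `b`
and `b` to `a`, so `Δ²` commutes with `a` and `b`, and `(a³ b)³ = Δ⁴`.
-/

section BraidRelation

variable {M : Type*} [Group M] {x y : M}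

theorem semiconjBy_of_braid (h : x * y * x = y * x * y) : SemiconjBy (x * y * x) x y := by
  rw [SemiconjBy]
  nth_rewrite 1 [h]
  group

theorem semiconjBy_of_braid' (h : x * y * x = y * x * y) : SemiconjBy (x * y * x) y x := by
  rw [h]
  exact semiconjBy_of_braid h.symm

theorem commute_sq_left_of_braid (h : x * y * x = y * x * y) : Commute ((x * y * x) ^ 2) x := by
  rw [sq]
  exact (semiconjBy_of_braid' h).mul_left (semiconjBy_of_braid h)

theorem commute_sq_right_of_braid (h : x * y * x = y * x * y) : Commute ((x * y * x) ^ 2) y := by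
  rw [sq]
  exact (semiconjBy_of_braid h).mul_left (semiconjBy_of_braid' h)

theorem pow_three_eq_of_braid (h : x * y * x = y * x * y) :
    (x * x * x * y) ^ 3 = ((x * y * x) ^ 2) ^ 2 := by
  have hconj : x * x * x * y = x * (x * (x * y * x)) * x⁻¹ := by group
  have hx : (x * y * x) * x = y * (x * y * x) := semiconjBy_of_braid h
  have hy : (x * y * x) * y = x * (x * y * x) := semiconjBy_of_braid' h
  have hcomm : Commute (((x * y * x) ^ 2) ^ 2) x := (commute_sq_left_of_braid h).pow_left 2
  generalize hd : x * y * x = d at hconj hx hy hcomm ⊢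
  calc (x * x * x * y) ^ 3 = x * (x * (d * x) * (d * x) * d) * x⁻¹ := by
        rw [hconj, conj_pow, pow_three']; group
    _ = x * (x * y * (d * y) * d * d) * x⁻¹ := by rw [hx]; group
    _ = x * ((x * y * x) * d * d * d) * x⁻¹ := by rw [hy]; group
    _ = (d ^ 2) ^ 2 := by rw [hd, ← hcomm.symm.mul_inv_cancel]; simp only [sq, mul_assoc]

theorem commute_pow_three_of_braid (h : x * y * x = y * x * y) :
    Commute x ((x * x * x * y) ^ 3) ∧ Commute y ((x * x * x * y) ^ 3) := by
  rw [pow_three_eq_of_braid h]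
  exact ⟨((commute_sq_left_of_braid h).pow_left 2).symm,
    ((commute_sq_right_of_braid h).pow_left 2).symm⟩

end BraidRelation

namespace Gervais

section Relations

variable {g n : ℕ}

theorem mk_eq_mk_of_isRel {u v : FreeGroup (Gen g n)} (h : IsRel g n (u * v⁻¹)) :
    PresentedGroup.mk _ u = (PresentedGroup.mk _ v : G g n) :=
  PresentedGroup.mk_eq_mk_of_mul_inv_mem h

theorem mk_aF (i : ℕ) : PresentedGroup.mk _ (aF g n i) = a g n i := by
  unfold aF a
  split_ifs <;> rfl

theorem mk_cF (i j : ℕ) : PresentedGroup.mk _ (cF g n i j) = c g n i j := by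
  unfold cF c
  split_ifs <;> rfl

theorem commute_of_disjointCurves {x y : Gen g n} (h : DisjointCurves g n x y) :
    Commute (PresentedGroup.of x : G g n) (PresentedGroup.of y) :=
  mk_eq_mk_of_isRel (IsRel.comm x y h)

theorem braid_of_meetOnce {x y : Gen g n} (h : MeetOnce g n x y) :
    (PresentedGroup.of x : G g n) * PresentedGroup.of y * PresentedGroup.of x =
      PresentedGroup.of y * PresentedGroup.of x * PresentedGroup.of y :=
  mk_eq_mk_of_isRel (IsRel.braid x y h)

theorem star_relation {i j k : ℕ} (h : Good (2 * g + n - 2) i j k) :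
    c g n i j * c g n j k * c g n k i = (a g n i * a g n j * a g n k * b g n) ^ 3 := by
  have hrel := mk_eq_mk_of_isRel (IsRel.star i j k h)
  simp only [map_mul, map_pow, mk_aF, mk_cF] at hrel
  exact hrel

theorem commute_a_a (i j : ℕ) : Commute (a g n i) (a g n j) := by
  obtain rfl | hij := eq_or_ne i j
  · exact Commute.refl _
  unfold a
  split_ifs
  exacts [commute_of_disjointCurves hij, Commute.one_right _, Commute.one_left _,
    Commute.one_left _]

theorem commute_a_c (l p q : ℕ) : Commute (a g n l) (c g n p q) := by
  unfold a c
  split_ifs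
  exacts [commute_of_disjointCurves trivial, Commute.one_right _, Commute.one_left _,
    Commute.one_left _]

theorem commute_b_c (p q : ℕ) : Commute (b g n) (c g n p q) := by
  unfold c
  split_ifs
  exacts [commute_of_disjointCurves trivial, Commute.one_right _]

theorem braid_a_b {i : ℕ} (hi : 1 ≤ i ∧ i ≤ 2 * g + n - 2) :
    a g n i * b g n * a g n i = b g n * a g n i * b g n := by
  rw [a, dif_pos hi]
  exact braid_of_meetOnce trivial

theorem commute_star_of_good {x : G g n} (hx : ∀ p q, Commute x (c g n p q)) {i j k : ℕ}
    (h : Good (2 * g + n - 2) i j k) :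
    Commute x ((a g n i * a g n j * a g n k * b g n) ^ 3) := by
  rw [← star_relation h]
  exact ((hx i j).mul_right (hx j k)).mul_right (hx k i)

theorem good_or_good_swap {m i j k : ℕ} (hi : 1 ≤ i ∧ i ≤ m) (hj : 1 ≤ j ∧ j ≤ m)
    (hk : 1 ≤ k ∧ k ≤ m) (hijk : ¬(i = j ∧ j = k)) : Good m i j k ∨ Good m j i k := by
  unfold Good
  omega

end Relations

theorem generators_commute_with_star_general (g n : ℕ) (i j k : ℕ)
    (hi : 1 ≤ i ∧ i ≤ 2 * g + n - 2) (hj : 1 ≤ j ∧ j ≤ 2 * g + n - 2)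
    (hk : 1 ≤ k ∧ k ≤ 2 * g + n - 2) :
    Commute (a g n i) ((a g n i * a g n j * a g n k * b g n) ^ 3) ∧
      Commute (a g n j) ((a g n i * a g n j * a g n k * b g n) ^ 3) ∧
      Commute (a g n k) ((a g n i * a g n j * a g n k * b g n) ^ 3) ∧
      Commute (b g n) ((a g n i * a g n j * a g n k * b g n) ^ 3) := by
  by_cases hijk : i = j ∧ j = k
  · obtain ⟨rfl, rfl⟩ := hijk
    obtain ⟨ha, hb⟩ := commute_pow_three_of_braid (braid_a_b hi)
    exact ⟨ha, ha, ha, hb⟩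
  have hstar : ∀ x : G g n, (∀ p q, Commute x (c g n p q)) →
      Commute x ((a g n i * a g n j * a g n k * b g n) ^ 3) := by
    intro x hx
    rcases good_or_good_swap hi hj hk hijk with hgood | hgood
    · exact commute_star_of_good hx hgood
    · rw [(commute_a_a i j).eq]
      exact commute_star_of_good hx hgood
  exact ⟨hstar _ (commute_a_c i), hstar _ (commute_a_c j), hstar _ (commute_a_c k),
    hstar _ commute_b_c⟩

/-- For all `i, j, k ∈ {1, …, m}`, each of `a_i`, `a_j`, `a_k` and `b`
commutes with `(a_i a_j a_k b)^3` in `G_{g,n}`. -/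
theorem generators_commute_with_star (g n : ℕ) (hg : 1 ≤ g) (i j k : ℕ)
    (hi : 1 ≤ i ∧ i ≤ 2 * g + n - 2) (hj : 1 ≤ j ∧ j ≤ 2 * g + n - 2)
    (hk : 1 ≤ k ∧ k ≤ 2 * g + n - 2) :
    Commute (a g n i) ((a g n i * a g n j * a g n k * b g n) ^ 3) ∧
      Commute (a g n j) ((a g n i * a g n j * a g n k * b g n) ^ 3) ∧
      Commute (a g n k) ((a g n i * a g n j * a g n k * b g n) ^ 3) ∧
      Commute (b g n) ((a g n i * a g n j * a g n k * b g n) ^ 3) :=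
  generators_commute_with_star_general g n i j k hi hj hk

end Gervais
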